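/- arXiv:2306.16534 — 4 statements merged into one kernel-verified Lean document; each statement's English description precedes it below -/
import Mathlib

section
/- The minimal total dissipation for erasing N independent qubits with only local (non-interacting) control is N times the single-qubit minimum: since the single-qubit Hellinger angle from the uniform distribution (1/2,1/2) to the point mass (1,0) is 2 arccos(1/√2) = π/2, the minimal local dissipated work is β W*_local = N·(π/2)²/τ = Nπ²/(4τ). In particular the ratio of the local minimum Nπ²/(4τ) to the global full-control minimum (2 arccos 2^{-N/2})²/τ grows like N/4 as N → ∞. -/
/-! The Bhattacharyya coefficient of `(1/2, 1/2)` and `(1, 0)` is `√(1/2) = cos (π/4)`, so the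
single-qubit Hellinger angle is `π/2`. After cancelling `N` and `τ`, the ratio divided by `N` is
`π² / (4 A_N²)` with `A_N = 2 arccos 2^(-N/2)`, and `A_N → 2 arccos 0 = π`. -/

open Real Filter

theorem sqrt_half_eq_cos_pi_div_four : √(1 / 2) = cos (π / 4) := by
  rw [cos_pi_div_four, sqrt_div' _ zero_le_two, sqrt_one]
  field_simp
  exact (sq_sqrt zero_le_two).symm

theorem two_mul_arccos_sqrt_half : 2 * arccos √(1 / 2) = π / 2 := by
  rw [sqrt_half_eq_cos_pi_div_four, arccos_cos (by positivity) (by linarith [pi_pos])]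
  ring

theorem tendsto_two_mul_arccos_of_tendsto_zero {α : Type*} {l : Filter α} {f : α → ℝ}
    (hf : Tendsto f l (nhds 0)) : Tendsto (fun x => 2 * arccos (f x)) l (nhds π) := by
  have h := ((continuous_arccos.tendsto 0).comp hf).const_mul 2
  rwa [arccos_zero, mul_div_cancel₀ _ two_ne_zero] at h

theorem tendsto_rpow_neg_natCast_div_atTop {b : ℝ} (hb : 1 < b) {c : ℝ} (hc : 0 < c) :
    Tendsto (fun N : ℕ => b ^ (-(N : ℝ) / c)) atTop (nhds 0) := by
  refine (tendsto_rpow_atBot_of_base_gt_one b hb).comp ?_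
  simp only [neg_div]
  exact tendsto_neg_atTop_atBot.comp (tendsto_natCast_atTop_atTop.atTop_div_const hc)

theorem mul_div_mul_div_div_div_cancel {N τ : ℝ} (hN : N ≠ 0) (hτ : τ ≠ 0) (c k a : ℝ) :
    N * c / (k * τ) / (a / τ) / N = c / (k * a) := by
  field_simp

/-- **Local (non-interacting) erasure dissipation and the collective advantage.**
The single-qubit Hellinger angle from the uniform distribution `(1/2,1/2)` to the
point mass `(1,0)` is `2 arccos(1/√2) = π/2`; hence the minimal local dissipated
work for `N` independent qubits is `N·(π/2)²/τ = Nπ²/(4τ)`.  Moreover, the ratio of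
this local minimum to the global full-control minimum `(2 arccos 2^{-N/2})²/τ`
grows like `N/4`: dividing the ratio by `N` converges to `1/4`. -/
theorem local_erasure_dissipation_and_collective_ratio
    (τ : ℝ) (hτ : 0 < τ) :
    2 * Real.arccos (Real.sqrt (1/2 * 1) + Real.sqrt (1/2 * 0)) = π / 2 ∧
    (∀ N : ℕ, (N : ℝ) * (2 * Real.arccos (Real.sqrt (1/2 * 1) + Real.sqrt (1/2 * 0))) ^ 2 / τ
      = (N : ℝ) * π ^ 2 / (4 * τ)) ∧
    Tendsto (fun N : ℕ =>
        (((N : ℝ) * π ^ 2 / (4 * τ)) /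
          ((2 * Real.arccos ((2:ℝ) ^ (-(N:ℝ)/2))) ^ 2 / τ)) / (N : ℝ))
      atTop (nhds (1/4)) := by
  have hangle : 2 * arccos (√(1/2 * 1) + √(1/2 * 0)) = π / 2 := by
    rw [mul_one, mul_zero, sqrt_zero, add_zero, two_mul_arccos_sqrt_half]
  refine ⟨hangle, fun N => by rw [hangle]; ring, ?_⟩
  have hglobal := tendsto_two_mul_arccos_of_tendsto_zero
    (tendsto_rpow_neg_natCast_div_atTop one_lt_two two_pos)
  have hlimit : Tendsto (fun N : ℕ => π ^ 2 / (4 * (2 * arccos ((2:ℝ) ^ (-(N:ℝ)/2))) ^ 2))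
      atTop (nhds (π ^ 2 / (4 * π ^ 2))) :=
    tendsto_const_nhds.div ((hglobal.pow 2).const_mul 4) (by positivity)
  rw [div_mul_cancel_right₀ (by positivity), ← one_div] at hlimit
  refine hlimit.congr' ?_
  filter_upwards [eventually_ne_atTop 0] with N hN
  exact (mul_div_mul_div_div_div_cancel (Nat.cast_ne_zero.2 hN) hτ.ne' _ _ _).symm
end

section
/- In the Star model with full control on the central-spin marginal and uniform control of the conditional outer-spin distributions, there exists an erasure protocol from any product thermal initial state to the deterministic all-zero state whose Fisher length is at most 2π; hence the dissipated work satisfies τβW_diss ≤ 4π², a bound independent of the number of spins N. -/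
open Real

/-- Fisher length of a path of distributions on a finite set. -/
noncomputable def fisherLen {ι : Type*} [Fintype ι] (p : ℝ → ι → ℝ) : ℝ :=
  ∫ t in (0:ℝ)..1, Real.sqrt (∑ i, (deriv (fun s => p s i) t) ^ 2 / p t i)

/-!
Write the central marginal as `(cos² θ, sin² θ)`. Rotating `θ` at unit speed with the
conditionals frozen has Fisher speed `2`, whatever the number of outer spins, because the
conditionals only contribute their total mass `1`. Erasure then takes four phases, each moving
one control: rotate the central spin from its initial angle `α ∈ [0, π/2]` to `true` (length
`π - 2α`); move the conditional given `false` to the point mass at `false`, which costs nothing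
since that conditional carries no weight; rotate the central spin to `false` (length `π`);
finally move the conditional given `true`, again for free. The total is `2π - 2α ≤ 2π`.
-/

open Filter Topology Set MeasureTheory

noncomputable section

section FisherSpeed

variable {ι : Type*} [Fintype ι]

def fisherSpeed (p : ℝ → ι → ℝ) (t : ℝ) : ℝ :=
  √(∑ i, (deriv (fun s => p s i) t) ^ 2 / p t i)

theorem fisherLen_eq_integral_fisherSpeed (p : ℝ → ι → ℝ) :
    fisherLen p = ∫ t in (0:ℝ)..1, fisherSpeed p t :=
  rfl

theorem fisherSpeed_congr {p q : ℝ → ι → ℝ} {t : ℝ}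
    (h : ∀ i, (fun s => p s i) =ᶠ[𝓝 t] fun s => q s i) :
    fisherSpeed p t = fisherSpeed q t := by
  simp only [fisherSpeed, fun i => (h i).deriv_eq, fun i => (h i).eq_of_nhds]

theorem fisherSpeed_const (P : ι → ℝ) (t : ℝ) : fisherSpeed (fun _ => P) t = 0 := by
  simp [fisherSpeed]

/-- No positivity of `K` is needed: `K ^ 2 / K = K` also holds at `K = 0`. -/
theorem fisherSpeed_mul_kernel {χ : Type*} [Fintype χ] (P : ℝ → ι → ℝ) (K : ι → χ → ℝ)
    (hK : ∀ i, ∑ x, K i x = 1) (t : ℝ) :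
    fisherSpeed (fun s (ix : ι × χ) => P s ix.1 * K ix.1 ix.2) t = fisherSpeed P t := by
  unfold fisherSpeed
  congr 1
  rw [Fintype.sum_prod_type]
  refine Finset.sum_congr rfl fun i _ => ?_
  simp only [deriv_mul_const_field]
  calc ∑ x, (deriv (fun s => P s i) t * K i x) ^ 2 / (P t i * K i x)
      = ∑ x, (deriv (fun s => P s i) t) ^ 2 / P t i * K i x := by
        refine Finset.sum_congr rfl fun x _ => ?_
        rw [mul_pow, mul_div_mul_comm, sq (K i x), mul_self_div_self]
    _ = (deriv (fun s => P s i) t) ^ 2 / P t i := by rw [← Finset.mul_sum, hK, mul_one]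

end FisherSpeed

theorem intervalIntegrable_and_integral_eq_of_eqOn_Ioo {f : ℝ → ℝ} {a b c : ℝ} (hab : a ≤ b)
    (h : EqOn f (fun _ => c) (Ioo a b)) :
    IntervalIntegrable f volume a b ∧ ∫ x in a..b, f x = (b - a) * c := by
  refine ⟨(intervalIntegrable_congr_uIoo (by rwa [uIoo_of_le hab])).mpr intervalIntegrable_const,
    ?_⟩
  rw [intervalIntegral.integral_congr_Ioo_of_le hab h, intervalIntegral.integral_const,
    smul_eq_mul]

theorem sum_prod_eq_one {κ : Type*} [Fintype κ] {n : ℕ} {r : κ → ℝ} (hr : ∑ b, r b = 1) :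
    ∑ x : Fin n → κ, ∏ j, r (x j) = 1 := by
  rw [← Fintype.sum_pow, hr, one_pow]

theorem sin_mul_cos_ne_zero_of_mem_Ioo {x : ℝ} (hx : x ∈ Ioo 0 (π / 2)) : sin x * cos x ≠ 0 :=
  (mul_pos (sin_pos_of_pos_of_lt_pi hx.1 (by linarith [hx.2, pi_pos]))
    (cos_pos_of_mem_Ioo ⟨by linarith [hx.1, pi_pos], hx.2⟩)).ne'

def angleDist (θ : ℝ) : Bool → ℝ := fun c => bif c then sin θ ^ 2 else cos θ ^ 2

theorem angleDist_nonneg (θ : ℝ) (c : Bool) : 0 ≤ angleDist θ c := by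
  cases c <;> simp only [angleDist, cond_true, cond_false] <;> positivity

theorem sum_angleDist (θ : ℝ) : ∑ c, angleDist θ c = 1 := by
  simp [angleDist]

theorem continuous_angleDist (c : Bool) : Continuous fun θ => angleDist θ c := by
  cases c <;> simp only [angleDist, cond_true, cond_false] <;> fun_prop

theorem exists_angleDist_eq {μ : Bool → ℝ} (hμ0 : ∀ c, 0 ≤ μ c) (hμ1 : ∑ c, μ c = 1) :
    ∃ α ∈ Icc 0 (π / 2), angleDist α = μ := by
  rw [Fintype.sum_bool] at hμ1
  have hμ_le : √(μ false) ≤ 1 := sqrt_le_one.mpr (by linarith [hμ0 true])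
  have hcos : cos (arccos √(μ false)) ^ 2 = μ false := by
    rw [cos_arccos (by linarith [sqrt_nonneg (μ false)]) hμ_le, sq_sqrt (hμ0 false)]
  refine ⟨arccos √(μ false), ⟨arccos_nonneg _, arccos_le_pi_div_two.mpr (sqrt_nonneg _)⟩, ?_⟩
  funext c
  cases c
  · exact hcos
  · simp only [angleDist, cond_true]
    linarith [sin_sq_add_cos_sq (arccos √(μ false))]

/-- The hypothesis excludes the points where the convention `x / 0 = 0` drops a term. -/
theorem fisherSpeed_angleDist {θ : ℝ → ℝ} {θ' t : ℝ} (hθ : HasDerivAt θ θ' t)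
    (hsc : sin (θ t) * cos (θ t) ≠ 0 ∨ θ' = 0) :
    fisherSpeed (fun s => angleDist (θ s)) t = 2 * |θ'| := by
  have hsin : deriv (fun s => sin (θ s) ^ 2) t = 2 * sin (θ t) * cos (θ t) * θ' := by
    rw [(hθ.sin.fun_pow 2).deriv]; push_cast; ring
  have hcos : deriv (fun s => cos (θ s) ^ 2) t = -(2 * sin (θ t) * cos (θ t) * θ') := by
    rw [(hθ.cos.fun_pow 2).deriv]; push_cast; ring
  have hsum : (2 * sin (θ t) * cos (θ t) * θ') ^ 2 / sin (θ t) ^ 2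
      + (-(2 * sin (θ t) * cos (θ t) * θ')) ^ 2 / cos (θ t) ^ 2 = (2 * |θ'|) ^ 2 := by
    rw [mul_pow (2 : ℝ), sq_abs]
    rcases hsc with hsc | rfl
    · have hs : sin (θ t) ≠ 0 := left_ne_zero_of_mul hsc
      have hc : cos (θ t) ≠ 0 := right_ne_zero_of_mul hsc
      field_simp
      linear_combination θ' ^ 2 * sin_sq_add_cos_sq (θ t)
    · simp
  simp only [fisherSpeed, Fintype.sum_bool, angleDist, cond_true, cond_false, hsin, hcos, hsum]
  exact sqrt_sq (by positivity)

def ramp (t : ℝ) : ℝ := min 1 (max 0 t)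

theorem ramp_of_nonpos {t : ℝ} (h : t ≤ 0) : ramp t = 0 := by
  simp [ramp, max_eq_left h]

theorem ramp_of_one_le {t : ℝ} (h : 1 ≤ t) : ramp t = 1 := by
  simp [ramp, max_eq_right (zero_le_one.trans h), h]

theorem ramp_of_mem_Icc {t : ℝ} (h : t ∈ Icc 0 1) : ramp t = t := by
  simp [ramp, max_eq_right h.1, h.2]

theorem ramp_mem_Icc (t : ℝ) : ramp t ∈ Icc 0 1 :=
  ⟨le_min zero_le_one (le_max_left 0 t), min_le_left 1 _⟩

@[fun_prop]
theorem continuous_ramp : Continuous ramp := by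
  unfold ramp; fun_prop

namespace StarModel

def diracFalse : Bool → ℝ := fun b => if b = false then 1 else 0

def jointDist (n : ℕ) (p : ℝ → Bool → ℝ) (q : ℝ → Bool → Bool → ℝ) :
    ℝ → Bool × (Fin n → Bool) → ℝ :=
  fun t i => p t i.1 * ∏ j, q t i.1 (i.2 j)

def erasureAngle (α t : ℝ) : ℝ := α + (π / 2 - α) * ramp (4 * t) - π / 2 * ramp (4 * t - 2)

def erasureWeight (c : Bool) (t : ℝ) : ℝ := bif c then ramp (4 * t - 3) else ramp (4 * t - 1)

def erasureMarginal (α t : ℝ) : Bool → ℝ := angleDist (erasureAngle α t)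

def erasureConditional (ν : Bool → ℝ) (t : ℝ) (c : Bool) : Bool → ℝ :=
  fun b => (1 - erasureWeight c t) * ν b + erasureWeight c t * diracFalse b

variable {n : ℕ} {α : ℝ} {ν : Bool → ℝ}

theorem continuous_erasureMarginal (α : ℝ) (c : Bool) :
    Continuous fun t => erasureMarginal α t c :=
  (continuous_angleDist c).comp (by unfold erasureAngle; fun_prop)

theorem continuous_erasureConditional (ν : Bool → ℝ) (c b : Bool) :
    Continuous fun t => erasureConditional ν t c b := by
  cases c <;> simp only [erasureConditional, erasureWeight, cond_true, cond_false] <;> fun_prop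

theorem erasureConditional_nonneg (hν : ∀ b, 0 ≤ ν b) (t : ℝ) (c b : Bool) :
    0 ≤ erasureConditional ν t c b := by
  have hw : erasureWeight c t ∈ Icc 0 1 := by cases c <;> exact ramp_mem_Icc _
  have hδ : 0 ≤ diracFalse b := by unfold diracFalse; split <;> norm_num
  exact add_nonneg (mul_nonneg (by linarith [hw.2]) (hν b)) (mul_nonneg hw.1 hδ)

theorem sum_erasureConditional (hν : ∑ b, ν b = 1) (t : ℝ) (c : Bool) :
    ∑ b, erasureConditional ν t c b = 1 := by
  rw [Fintype.sum_bool] at hν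
  simp only [erasureConditional, diracFalse, Fintype.sum_bool]
  norm_num
  linear_combination (1 - erasureWeight c t) * hν

theorem erasureMarginal_zero (α : ℝ) : erasureMarginal α 0 = angleDist α := by
  simp [erasureMarginal, erasureAngle, ramp_of_nonpos]

theorem erasureMarginal_one (α : ℝ) : erasureMarginal α 1 = diracFalse := by
  have hangle : erasureAngle α 1 = 0 := by
    simp only [erasureAngle]
    rw [ramp_of_one_le (by norm_num), ramp_of_one_le (by norm_num)]
    ring
  funext c
  cases c <;> simp [erasureMarginal, hangle, angleDist, diracFalse]

theorem erasureConditional_of_weight_eq_zero {t : ℝ} {c : Bool} (h : erasureWeight c t = 0) :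
    erasureConditional ν t c = ν := by
  funext b; simp [erasureConditional, h]

theorem erasureConditional_of_weight_eq_one {t : ℝ} {c : Bool} (h : erasureWeight c t = 1) :
    erasureConditional ν t c = diracFalse := by
  funext b; simp [erasureConditional, h]

theorem erasureConditional_zero (ν : Bool → ℝ) (c : Bool) : erasureConditional ν 0 c = ν :=
  erasureConditional_of_weight_eq_zero (by cases c <;> exact ramp_of_nonpos (by norm_num))

theorem erasureConditional_one (ν : Bool → ℝ) (c : Bool) :
    erasureConditional ν 1 c = diracFalse :=
  erasureConditional_of_weight_eq_one (by cases c <;> exact ramp_of_one_le (by norm_num))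

theorem erasure_phase_one {s : ℝ} (hs : s ∈ Ioo 0 (1 / 4)) :
    erasureAngle α s = α + 4 * (π / 2 - α) * s ∧ ∀ c, erasureConditional ν s c = ν := by
  obtain ⟨h0, h1⟩ := hs
  refine ⟨?_, fun c => erasureConditional_of_weight_eq_zero ?_⟩
  · rw [erasureAngle, ramp_of_mem_Icc ⟨by linarith, by linarith⟩, ramp_of_nonpos (by linarith)]
    ring
  · cases c <;> exact ramp_of_nonpos (by linarith)

theorem erasure_phase_two {s : ℝ} (hs : s ∈ Ioo (1 / 4) (1 / 2)) :
    erasureAngle α s = π / 2 ∧ erasureConditional ν s true = ν := by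
  obtain ⟨h0, h1⟩ := hs
  refine ⟨?_, erasureConditional_of_weight_eq_zero (ramp_of_nonpos (by linarith))⟩
  rw [erasureAngle, ramp_of_one_le (by linarith), ramp_of_nonpos (by linarith)]
  ring

theorem erasure_phase_three {s : ℝ} (hs : s ∈ Ioo (1 / 2) (3 / 4)) :
    erasureAngle α s = 3 * (π / 2) - 2 * π * s ∧
      erasureConditional ν s true = ν ∧ erasureConditional ν s false = diracFalse := by
  obtain ⟨h0, h1⟩ := hs
  refine ⟨?_, erasureConditional_of_weight_eq_zero (ramp_of_nonpos (by linarith)),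
    erasureConditional_of_weight_eq_one (ramp_of_one_le (by linarith))⟩
  rw [erasureAngle, ramp_of_one_le (by linarith), ramp_of_mem_Icc ⟨by linarith, by linarith⟩]
  ring

theorem erasure_phase_four {s : ℝ} (hs : s ∈ Ioo (3 / 4) 1) :
    erasureAngle α s = 0 ∧ erasureConditional ν s false = diracFalse := by
  obtain ⟨h0, h1⟩ := hs
  refine ⟨?_, erasureConditional_of_weight_eq_one (ramp_of_one_le (by linarith))⟩
  rw [erasureAngle, ramp_of_one_le (by linarith), ramp_of_one_le (by linarith)]
  ring

theorem fisherSpeed_erasure_phase_one (hα : α ∈ Icc 0 (π / 2)) (hν : ∑ b, ν b = 1) {t : ℝ}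
    (ht : t ∈ Ioo 0 (1 / 4)) :
    fisherSpeed (jointDist n (erasureMarginal α) (erasureConditional ν)) t
      = 2 * (4 * (π / 2 - α)) := by
  have hlocal : ∀ i, (fun s => jointDist n (erasureMarginal α) (erasureConditional ν) s i)
      =ᶠ[𝓝 t] fun s => angleDist (α + 4 * (π / 2 - α) * s) i.1 * ∏ j, ν (i.2 j) := by
    intro i
    filter_upwards [isOpen_Ioo.mem_nhds ht] with s hs
    obtain ⟨hangle, hcond⟩ := erasure_phase_one (α := α) (ν := ν) hs
    simp only [jointDist, erasureMarginal, hangle, hcond]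
  have hθ : HasDerivAt (fun s => α + 4 * (π / 2 - α) * s) (4 * (π / 2 - α)) t := by
    simpa using ((hasDerivAt_id t).const_mul (4 * (π / 2 - α))).const_add α
  have hsc : sin (α + 4 * (π / 2 - α) * t) * cos (α + 4 * (π / 2 - α) * t) ≠ 0
      ∨ 4 * (π / 2 - α) = 0 := by
    rcases hα.2.lt_or_eq with hlt | rfl
    · left
      apply sin_mul_cos_ne_zero_of_mem_Ioo
      constructor <;> nlinarith [hα.1, ht.1, ht.2]
    · right; ring
  rw [fisherSpeed_congr hlocal]
  refine (fisherSpeed_mul_kernel (fun s => angleDist (α + 4 * (π / 2 - α) * s))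
    (fun (_ : Bool) (x : Fin n → Bool) => ∏ j, ν (x j)) (fun _ => sum_prod_eq_one hν)
    t).trans ?_
  rw [fisherSpeed_angleDist hθ hsc, abs_of_nonneg (by linarith [hα.2])]

theorem fisherSpeed_erasure_phase_two {t : ℝ} (ht : t ∈ Ioo (1 / 4) (1 / 2)) :
    fisherSpeed (jointDist n (erasureMarginal α) (erasureConditional ν)) t = 0 := by
  have hlocal : ∀ i, (fun s => jointDist n (erasureMarginal α) (erasureConditional ν) s i)
      =ᶠ[𝓝 t] fun _ => angleDist (π / 2) i.1 * ∏ j, ν (i.2 j) := by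
    rintro ⟨c, x⟩
    filter_upwards [isOpen_Ioo.mem_nhds ht] with s hs
    obtain ⟨hangle, hcond⟩ := erasure_phase_two (α := α) (ν := ν) hs
    cases c <;> simp [jointDist, erasureMarginal, angleDist, hangle, hcond]
  rw [fisherSpeed_congr hlocal, fisherSpeed_const]

theorem fisherSpeed_erasure_phase_three (hν : ∑ b, ν b = 1) {t : ℝ}
    (ht : t ∈ Ioo (1 / 2) (3 / 4)) :
    fisherSpeed (jointDist n (erasureMarginal α) (erasureConditional ν)) t = 2 * (2 * π) := by
  have hlocal : ∀ i, (fun s => jointDist n (erasureMarginal α) (erasureConditional ν) s i)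
      =ᶠ[𝓝 t] fun s => angleDist (3 * (π / 2) - 2 * π * s) i.1
        * ∏ j, (bif i.1 then ν else diracFalse) (i.2 j) := by
    rintro ⟨c, x⟩
    filter_upwards [isOpen_Ioo.mem_nhds ht] with s hs
    obtain ⟨hangle, htrue, hfalse⟩ := erasure_phase_three (α := α) (ν := ν) hs
    cases c <;> simp only [jointDist, erasureMarginal, hangle, htrue, hfalse, cond_true, cond_false]
  have hθ : HasDerivAt (fun s => 3 * (π / 2) - 2 * π * s) (-(2 * π)) t := by
    simpa using ((hasDerivAt_id t).const_mul (2 * π)).const_sub (3 * (π / 2))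
  have hsc : sin (3 * (π / 2) - 2 * π * t) * cos (3 * (π / 2) - 2 * π * t) ≠ 0 := by
    apply sin_mul_cos_ne_zero_of_mem_Ioo
    constructor <;> nlinarith [ht.1, ht.2, pi_pos]
  have hkernel (c : Bool) :
      ∑ x : Fin n → Bool, ∏ j, (bif c then ν else diracFalse) (x j) = 1 := by
    apply sum_prod_eq_one
    cases c
    · simp [diracFalse]
    · exact hν
  rw [fisherSpeed_congr hlocal]
  refine (fisherSpeed_mul_kernel (fun s => angleDist (3 * (π / 2) - 2 * π * s))
    (fun (c : Bool) (x : Fin n → Bool) => ∏ j, (bif c then ν else diracFalse) (x j))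
    hkernel t).trans ?_
  rw [fisherSpeed_angleDist hθ (Or.inl hsc), abs_neg, abs_of_pos (by positivity)]

theorem fisherSpeed_erasure_phase_four {t : ℝ} (ht : t ∈ Ioo (3 / 4) 1) :
    fisherSpeed (jointDist n (erasureMarginal α) (erasureConditional ν)) t = 0 := by
  have hlocal : ∀ i, (fun s => jointDist n (erasureMarginal α) (erasureConditional ν) s i)
      =ᶠ[𝓝 t] fun _ => angleDist 0 i.1 * ∏ j, diracFalse (i.2 j) := by
    rintro ⟨c, x⟩
    filter_upwards [isOpen_Ioo.mem_nhds ht] with s hs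
    obtain ⟨hangle, hcond⟩ := erasure_phase_four (α := α) (ν := ν) hs
    cases c <;> simp [jointDist, erasureMarginal, angleDist, hangle, hcond]
  rw [fisherSpeed_congr hlocal, fisherSpeed_const]

theorem fisherLen_erasure (hα : α ∈ Icc 0 (π / 2)) (hν : ∑ b, ν b = 1) :
    fisherLen (jointDist n (erasureMarginal α) (erasureConditional ν)) = 2 * π - 2 * α := by
  obtain ⟨hi₁, he₁⟩ := intervalIntegrable_and_integral_eq_of_eqOn_Ioo (by norm_num)
    fun t ht => fisherSpeed_erasure_phase_one (n := n) hα hν ht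
  obtain ⟨hi₂, he₂⟩ := intervalIntegrable_and_integral_eq_of_eqOn_Ioo (by norm_num)
    fun t ht => fisherSpeed_erasure_phase_two (n := n) (α := α) (ν := ν) ht
  obtain ⟨hi₃, he₃⟩ := intervalIntegrable_and_integral_eq_of_eqOn_Ioo (by norm_num)
    fun t ht => fisherSpeed_erasure_phase_three (n := n) (α := α) hν ht
  obtain ⟨hi₄, he₄⟩ := intervalIntegrable_and_integral_eq_of_eqOn_Ioo (by norm_num)
    fun t ht => fisherSpeed_erasure_phase_four (n := n) (α := α) (ν := ν) ht
  rw [fisherLen_eq_integral_fisherSpeed,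
    ← intervalIntegral.integral_add_adjacent_intervals (hi₁.trans (hi₂.trans hi₃)) hi₄,
    ← intervalIntegral.integral_add_adjacent_intervals hi₁ (hi₂.trans hi₃),
    ← intervalIntegral.integral_add_adjacent_intervals hi₂ hi₃, he₁, he₂, he₃, he₄]
  ring

end StarModel

end

open StarModel in
/-- **N-independent erasure bound for the Star model.**
With full control on the central-spin marginal and uniform control of the
conditional outer-spin distributions, there is an erasure protocol from any
product thermal initial state (central marginal `μ`, each of the `n` outer spins
distributed as `ν`) to the deterministic all-zero state whose Fisher length is at
most `2π`; hence `τβW_diss = L² ≤ 4π²`, independent of the number of spins. -/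
theorem star_model_erasure_dissipation_bound
    (n : ℕ) (μ ν : Bool → ℝ)
    (hμ : (∀ c, 0 ≤ μ c) ∧ ∑ c : Bool, μ c = 1)
    (hν : (∀ b, 0 ≤ ν b) ∧ ∑ b : Bool, ν b = 1) :
    ∃ (p : ℝ → Bool → ℝ) (q : ℝ → Bool → Bool → ℝ),
      (∀ c, Continuous (fun t => p t c)) ∧
      (∀ c b, Continuous (fun t => q t c b)) ∧
      (∀ t ∈ Set.Icc (0:ℝ) 1,
        (∀ c, 0 ≤ p t c) ∧ (∑ c : Bool, p t c = 1) ∧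
        ∀ c, (∀ b, 0 ≤ q t c b) ∧ ∑ b : Bool, q t c b = 1) ∧
      p 0 = μ ∧ (∀ c, q 0 c = ν) ∧
      (p 1 = fun c => if c = false then 1 else 0) ∧
      (∀ c, q 1 c = fun b => if b = false then 1 else 0) ∧
      fisherLen (fun t (i : Bool × (Fin n → Bool)) => p t i.1 * ∏ j, q t i.1 (i.2 j))
        ≤ 2 * π ∧
      (fisherLen (fun t (i : Bool × (Fin n → Bool)) => p t i.1 * ∏ j, q t i.1 (i.2 j))) ^ 2
        ≤ 4 * π ^ 2 := by
  obtain ⟨α, hα, hμα⟩ := exists_angleDist_eq hμ.1 hμ.2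
  have hL : fisherLen (jointDist n (erasureMarginal α) (erasureConditional ν)) = 2 * π - 2 * α :=
    fisherLen_erasure hα hν.2
  refine ⟨erasureMarginal α, erasureConditional ν, continuous_erasureMarginal α,
    continuous_erasureConditional ν,
    fun t _ => ⟨fun c => angleDist_nonneg _ c, sum_angleDist _,
      fun c => ⟨erasureConditional_nonneg hν.1 t c, sum_erasureConditional hν.2 t c⟩⟩,
    (erasureMarginal_zero α).trans hμα, erasureConditional_zero ν, erasureMarginal_one α,
    erasureConditional_one ν, ?_, ?_⟩
  · exact hL.trans_le (by linarith [hα.1])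
  · rw [show (4 : ℝ) * π ^ 2 = (2 * π) ^ 2 by ring]
    exact hL ▸ pow_le_pow_left₀ (by linarith [hα.2, pi_pos]) (by linarith [hα.1]) 2
end

section
/- Let L > 0 and consider the ODE L = 2u̇(t) sin(L/2) / (1 − 2u(t)(1−u(t))(1 − cos(L/2))) on t ∈ [0,1] with u(0)=0. Then the unique solution is u(t) = (1/2)(1 + tan(L(2t−1)/4)/tan(L/4)), and it satisfies u(1) = 1, is strictly increasing, and maps [0,1] bijectively onto [0,1], provided 0 < L < 2π. -/
/-!
With `φ = L/4` and `θ = L(2t-1)/4 ∈ [-φ, φ]`, so that `u = (1 + tan θ / tan φ)/2`, the identities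
`u(1-u) = (1 - tan² θ / tan² φ)/4` and `1 - cos 2φ = 2 sin² φ` give
`1 - 2u(1-u)(1 - cos 2φ) = cos² φ / cos² θ`, while `u̇ = L / (4 tan φ cos² θ)`; multiplying the
first by `L` and the second by `2 sin 2φ` gives the same value. Monotonicity and the boundary values
come from `tan` being odd and increasing on `(-π/2, π/2)`, and uniqueness from Picard–Lindelöf,
the right-hand side being a polynomial in `u`.
-/

open Real Set

theorem ODE_solution_unique_of_locallyLipschitz {E : Type*} [NormedAddCommGroup E]
    [NormedSpace ℝ E] {F : E → E} (hF : LocallyLipschitz F) {f g : ℝ → E} {a b : ℝ}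
    (hf : ContinuousOn f (Icc a b)) (hf' : ∀ t ∈ Ico a b, HasDerivWithinAt f (F (f t)) (Ici t) t)
    (hg : ContinuousOn g (Icc a b)) (hg' : ∀ t ∈ Ico a b, HasDerivWithinAt g (F (g t)) (Ici t) t)
    (ha : f a = g a) : EqOn f g (Icc a b) := by
  set K := f '' Icc a b ∪ g '' Icc a b
  have hK : IsCompact K :=
    (isCompact_Icc.image_of_continuousOn hf).union (isCompact_Icc.image_of_continuousOn hg)
  obtain ⟨C, hC⟩ := hF.locallyLipschitzOn.exists_lipschitzOnWith_of_compact hK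
  exact ODE_solution_unique_of_mem_Icc_right (s := fun _ => K) (fun _ _ => hC) hf hf'
    (fun t ht => .inl (mem_image_of_mem f (Ico_subset_Icc_self ht))) hg hg'
    (fun t ht => .inr (mem_image_of_mem g (Ico_subset_Icc_self ht))) ha

theorem StrictMonoOn.bijOn_Icc {α β : Type*} [ConditionallyCompleteLinearOrder α]
    [TopologicalSpace α] [OrderTopology α] [DenselyOrdered α] [LinearOrder β]
    [TopologicalSpace β] [OrderClosedTopology β] {f : α → β} {a b : α}
    (hf : StrictMonoOn f (Icc a b)) (hc : ContinuousOn f (Icc a b)) (hab : a ≤ b) :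
    BijOn f (Icc a b) (Icc (f a) (f b)) :=
  ⟨hf.monotoneOn.mapsTo_Icc, hf.injOn, hc.surjOn_Icc (left_mem_Icc.2 hab) (right_mem_Icc.2 hab)⟩

noncomputable def geodesicField (L x : ℝ) : ℝ :=
  L * (1 - 2 * x * (1 - x) * (1 - cos (L / 2))) / (2 * sin (L / 2))

theorem geodesicField_eq_iff {L x d : ℝ} (h : sin (L / 2) ≠ 0) :
    geodesicField L x = d ↔
      L * (1 - 2 * x * (1 - x) * (1 - cos (L / 2))) = 2 * d * sin (L / 2) := by
  rw [geodesicField, div_eq_iff (mul_ne_zero two_ne_zero h)]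
  constructor <;> intro hd <;> linarith

theorem locallyLipschitz_geodesicField (L : ℝ) : LocallyLipschitz (geodesicField L) :=
  ContDiff.locallyLipschitz (by unfold geodesicField; fun_prop)

noncomputable def geodesicParam (L t : ℝ) : ℝ :=
  (1 / 2) * (1 + tan (L * (2 * t - 1) / 4) / tan (L / 4))

theorem geodesicParam_zero {L : ℝ} (h : tan (L / 4) ≠ 0) : geodesicParam L 0 = 0 := by
  rw [geodesicParam, show L * (2 * 0 - 1) / 4 = -(L / 4) by ring, tan_neg, neg_div, div_self h]
  ring

theorem geodesicParam_one {L : ℝ} (h : tan (L / 4) ≠ 0) : geodesicParam L 1 = 1 := by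
  rw [geodesicParam, show L * (2 * 1 - 1) / 4 = L / 4 by ring, div_self h]
  ring

theorem geodesicAngle_mem_Ioo {L t : ℝ} (h0 : 0 ≤ L) (h2 : L < 2 * π) (ht : t ∈ Icc (0 : ℝ) 1) :
    L * (2 * t - 1) / 4 ∈ Ioo (-(π / 2)) (π / 2) := by
  obtain ⟨ht0, ht1⟩ := ht
  constructor <;> nlinarith

theorem tan_div_four_pos {L : ℝ} (h0 : 0 < L) (h2 : L < 2 * π) : 0 < tan (L / 4) :=
  tan_pos_of_pos_of_lt_pi_div_two (by positivity) (by linarith)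

theorem strictMonoOn_geodesicParam {L : ℝ} (h0 : 0 < L) (h2 : L < 2 * π) :
    StrictMonoOn (geodesicParam L) (Icc 0 1) := by
  intro t₁ ht₁ t₂ ht₂ h
  have htan := strictMonoOn_tan (geodesicAngle_mem_Ioo h0.le h2 ht₁)
    (geodesicAngle_mem_Ioo h0.le h2 ht₂) (by nlinarith)
  have := tan_div_four_pos h0 h2
  unfold geodesicParam
  gcongr

theorem hasDerivAt_geodesicParam {L t : ℝ} (h : cos (L * (2 * t - 1) / 4) ≠ 0) :
    HasDerivAt (geodesicParam L) (L / (4 * tan (L / 4) * cos (L * (2 * t - 1) / 4) ^ 2)) t := by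
  have hθ : HasDerivAt (fun t : ℝ => L * (2 * t - 1) / 4) (L / 2) t :=
    (((((hasDerivAt_id t).const_mul 2).sub_const 1).const_mul L).div_const 4).congr_deriv (by ring)
  have := ((((hasDerivAt_tan h).comp t hθ).div_const (tan (L / 4))).const_add 1).const_mul (1 / 2)
  exact this.congr_deriv (by ring)

theorem geodesicField_geodesicParam {L t : ℝ} (h : cos (L * (2 * t - 1) / 4) ≠ 0)
    (hs : sin (L / 4) ≠ 0) (hc : cos (L / 4) ≠ 0) :
    geodesicField L (geodesicParam L t) =
      L / (4 * tan (L / 4) * cos (L * (2 * t - 1) / 4) ^ 2) := by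
  rw [geodesicField, geodesicParam, show L / 2 = 2 * (L / 4) by ring]
  generalize L / 4 = φ at *
  generalize L * (2 * t - 1) / 4 = θ at *
  rw [cos_two_mul, sin_two_mul, tan_eq_sin_div_cos, tan_eq_sin_div_cos]
  field_simp
  linear_combination
    8 * L * cos φ ^ 2 * (sin φ ^ 2 * sin_sq_add_cos_sq θ - sin θ ^ 2 * sin_sq_add_cos_sq φ)

theorem hasDerivAt_geodesicParam_eq_geodesicField {L t : ℝ} (h0 : 0 < L) (h2 : L < 2 * π)
    (ht : t ∈ Icc (0 : ℝ) 1) :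
    HasDerivAt (geodesicParam L) (geodesicField L (geodesicParam L t)) t := by
  have hcos := (cos_pos_of_mem_Ioo (geodesicAngle_mem_Ioo h0.le h2 ht)).ne'
  have hsin4 : 0 < sin (L / 4) := sin_pos_of_pos_of_lt_pi (by positivity) (by linarith)
  have hcos4 : 0 < cos (L / 4) := cos_pos_of_mem_Ioo ⟨by linarith, by linarith⟩
  rw [geodesicField_geodesicParam hcos hsin4.ne' hcos4.ne']
  exact hasDerivAt_geodesicParam hcos

/-- **The constant-speed reparametrization ODE for great-circle geodesics.**
For `0 < L < 2π`, the function
`u(t) = (1/2)(1 + tan(L(2t−1)/4)/tan(L/4))`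
solves `L·(1 − 2u(1−u)(1 − cos(L/2))) = 2u̇·sin(L/2)` on `[0,1]` with `u(0) = 0`,
satisfies `u(1) = 1`, is strictly increasing on `[0,1]` and maps `[0,1]`
bijectively onto `[0,1]`; moreover it is the unique such solution with `u(0) = 0`. -/
theorem geodesic_reparametrization_ode
    (L : ℝ) (hL0 : 0 < L) (hL2 : L < 2 * π)
    (u : ℝ → ℝ)
    (hu : u = fun t => (1/2) * (1 + Real.tan (L * (2 * t - 1) / 4) / Real.tan (L / 4))) :
    u 0 = 0 ∧ u 1 = 1 ∧
    (∀ t ∈ Icc (0:ℝ) 1, ∃ d : ℝ, HasDerivAt u d t ∧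
      L * (1 - 2 * u t * (1 - u t) * (1 - Real.cos (L / 2))) = 2 * d * Real.sin (L / 2)) ∧
    StrictMonoOn u (Icc (0:ℝ) 1) ∧
    Set.BijOn u (Icc (0:ℝ) 1) (Icc (0:ℝ) 1) ∧
    (∀ v : ℝ → ℝ, v 0 = 0 →
      (∀ t ∈ Icc (0:ℝ) 1, ∃ d : ℝ, HasDerivAt v d t ∧
        L * (1 - 2 * v t * (1 - v t) * (1 - Real.cos (L / 2))) = 2 * d * Real.sin (L / 2)) →
      ∀ t ∈ Icc (0:ℝ) 1, v t = u t) := by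
  have htan : tan (L / 4) ≠ 0 := (tan_div_four_pos hL0 hL2).ne'
  have hsin : sin (L / 2) ≠ 0 := (sin_pos_of_pos_of_lt_pi (by positivity) (by linarith)).ne'
  have hsolves : ∀ t ∈ Icc (0 : ℝ) 1,
      HasDerivAt (geodesicParam L) (geodesicField L (geodesicParam L t)) t :=
    fun _ ht => hasDerivAt_geodesicParam_eq_geodesicField hL0 hL2 ht
  have hcont : ContinuousOn (geodesicParam L) (Icc 0 1) := HasDerivAt.continuousOn hsolves
  have h0 := geodesicParam_zero htan
  have h1 := geodesicParam_one htan
  have hmono := strictMonoOn_geodesicParam hL0 hL2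
  have hbij := hmono.bijOn_Icc hcont zero_le_one
  rw [h0, h1] at hbij
  subst hu
  refine ⟨h0, h1, fun t ht => ⟨_, hsolves t ht, (geodesicField_eq_iff hsin).1 rfl⟩, hmono,
    hbij, fun v hv0 hv => ?_⟩
  have hvsolves : ∀ t ∈ Icc (0 : ℝ) 1, HasDerivAt v (geodesicField L (v t)) t := fun t ht => by
    obtain ⟨d, hd, hode⟩ := hv t ht
    rwa [(geodesicField_eq_iff hsin).2 hode]
  exact ODE_solution_unique_of_locallyLipschitz (locallyLipschitz_geodesicField L)
    (HasDerivAt.continuousOn hvsolves)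
    (fun t ht => (hvsolves t (Ico_subset_Icc_self ht)).hasDerivWithinAt) hcont
    (fun t ht => (hsolves t (Ico_subset_Icc_self ht)).hasDerivWithinAt) (hv0.trans h0.symm)
end

section
/- Let p(t), t∈[0,1], be a smooth path of positive probability vectors whose square-root path r(t) = 2√(p(t)) traverses the great-circle geodesic r(t) = (sin((1−t)L/2)·r(0) + sin(tL/2)·r(1))/sin(L/2) on the radius-2 sphere, where L is the Hellinger angle between p(0) and p(1) with 0 < L < π. Then p(t) = (sin((1−t)L/2)·√(p(0)) + sin(tL/2)·√(p(1)))²/sin²(L/2) componentwise, this is a probability vector for every t, the path has constant Fisher speed L, and its total Fisher length is exactly L = 2 arccos(∑_i √(p_i(0)p_i(1))). -/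
/-!
Put `u = √p₀`, `v = √p₁`: unit vectors with `⟨u, v⟩ = ∑ √(p₀ p₁) = cos θ`, `θ = L / 2`.
Then `q t = γ(t)²` coordinatewise, where `γ(t) = (sin((1-t)θ) u + sin(tθ) v) / sin θ` is the
great circle from `u` to `v`. The sine and cosine addition formulas give `‖γ‖ = 1`, i.e.
`∑ q = 1`, and `‖γ'‖ = θ`; since `(d(γᵢ²))² / γᵢ² = 4 γᵢ'²`, the Fisher speed of `q` is
`2 ‖γ'‖ = L`.
-/

open Real Set

theorem sin_sq_add_sin_sq_add_two_mul_sin_mul_sin_mul_cos_add (a b : ℝ) :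
    sin a ^ 2 + sin b ^ 2 + 2 * sin a * sin b * cos (a + b) = sin (a + b) ^ 2 := by
  rw [sin_add, cos_add]
  linear_combination -sin b ^ 2 * sin_sq_add_cos_sq a - sin a ^ 2 * sin_sq_add_cos_sq b

theorem cos_sq_add_cos_sq_sub_two_mul_cos_mul_cos_mul_cos_add (a b : ℝ) :
    cos a ^ 2 + cos b ^ 2 - 2 * cos a * cos b * cos (a + b) = sin (a + b) ^ 2 := by
  rw [sin_add, cos_add]
  linear_combination -cos b ^ 2 * sin_sq_add_cos_sq a - cos a ^ 2 * sin_sq_add_cos_sq b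

section UnitVectors

variable {ι : Type*} [Fintype ι] {x y : ι → ℝ}

theorem sum_mul_le_one_of_sum_sq_eq_one (hx : ∑ i, x i ^ 2 = 1) (hy : ∑ i, y i ^ 2 = 1) :
    ∑ i, x i * y i ≤ 1 := by
  have h : ∑ i, 2 * x i * y i ≤ ∑ i, (x i ^ 2 + y i ^ 2) :=
    Finset.sum_le_sum fun i _ => two_mul_le_add_sq (x i) (y i)
  simp only [mul_assoc] at h
  rw [← Finset.mul_sum, Finset.sum_add_distrib, hx, hy] at h
  linarith

theorem sum_add_sq_of_sum_sq_eq_one (hx : ∑ i, x i ^ 2 = 1) (hy : ∑ i, y i ^ 2 = 1)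
    (α β : ℝ) :
    ∑ i, (α * x i + β * y i) ^ 2 = α ^ 2 + β ^ 2 + 2 * α * β * ∑ i, x i * y i := by
  have h : ∀ i, (α * x i + β * y i) ^ 2
      = α ^ 2 * x i ^ 2 + β ^ 2 * y i ^ 2 + 2 * α * β * (x i * y i) := fun i => by ring
  simp only [h, Finset.sum_add_distrib, ← Finset.mul_sum, hx, hy, mul_one]

end UnitVectors

theorem deriv_sq_sq_div_sq {g : ℝ → ℝ} {t : ℝ} (hg : DifferentiableAt ℝ g t)
    (ht : g t ≠ 0) :
    deriv (fun s => g s ^ 2) t ^ 2 / g t ^ 2 = 4 * deriv g t ^ 2 := by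
  rw [deriv_fun_pow hg]
  field_simp
  ring

section GreatCircle

variable {ι : Type*} {θ : ℝ} {x y : ι → ℝ}

noncomputable def greatCircle (θ : ℝ) (x y : ι → ℝ) (t : ℝ) (i : ι) : ℝ :=
  (sin ((1 - t) * θ) * x i + sin (t * θ) * y i) / sin θ

theorem greatCircle_zero (hθ : sin θ ≠ 0) : greatCircle θ x y 0 = x := by
  ext i
  simp [greatCircle, hθ]

theorem greatCircle_one (hθ : sin θ ≠ 0) : greatCircle θ x y 1 = y := by
  ext i
  simp [greatCircle, hθ]

theorem greatCircle_pos (hθ₀ : 0 < θ) (hθπ : θ < π) (hx : ∀ i, 0 < x i)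
    (hy : ∀ i, 0 < y i) {t : ℝ} (ht : t ∈ Icc 0 1) (i : ι) : 0 < greatCircle θ x y t i := by
  obtain ⟨ht₀, ht₁⟩ := ht
  have hnum : 0 < sin ((1 - t) * θ) * x i + sin (t * θ) * y i := by
    rcases ht₁.lt_or_eq with hlt | rfl
    · have ha : 0 < sin ((1 - t) * θ) := sin_pos_of_pos_of_lt_pi (by nlinarith) (by nlinarith)
      have hb : 0 ≤ sin (t * θ) := sin_nonneg_of_nonneg_of_le_pi (by positivity) (by nlinarith)
      exact add_pos_of_pos_of_nonneg (mul_pos ha (hx i)) (mul_nonneg hb (hy i).le)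
    · simpa using mul_pos (sin_pos_of_pos_of_lt_pi hθ₀ hθπ) (hy i)
  exact div_pos hnum (sin_pos_of_pos_of_lt_pi hθ₀ hθπ)

theorem hasDerivAt_greatCircle (t : ℝ) (i : ι) :
    HasDerivAt (fun s => greatCircle θ x y s i)
      ((-(θ * cos ((1 - t) * θ)) * x i + θ * cos (t * θ) * y i) / sin θ) t := by
  have ha : HasDerivAt (fun s : ℝ => (1 - s) * θ) (-θ) t := by
    simpa using ((hasDerivAt_id t).const_sub 1).mul_const θ
  have hb : HasDerivAt (fun s : ℝ => s * θ) θ t := by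
    simpa using (hasDerivAt_id t).mul_const θ
  exact (((ha.sin.mul_const (x i)).add (hb.sin.mul_const (y i))).div_const (sin θ)).congr_deriv
    (by ring)

section UnitSphere

variable [Fintype ι] (hx : ∑ i, x i ^ 2 = 1) (hy : ∑ i, y i ^ 2 = 1)
  (hxy : ∑ i, x i * y i = cos θ) (hθ : sin θ ≠ 0)
include hx hy hxy hθ

theorem sum_greatCircle_sq (t : ℝ) : ∑ i, greatCircle θ x y t i ^ 2 = 1 := by
  have h := sum_add_sq_of_sum_sq_eq_one hx hy (sin ((1 - t) * θ) / sin θ) (sin (t * θ) / sin θ)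
  simp only [div_mul_eq_mul_div, ← add_div] at h
  have hθt : (1 - t) * θ + t * θ = θ := by ring
  have key := sin_sq_add_sin_sq_add_two_mul_sin_mul_sin_mul_cos_add ((1 - t) * θ) (t * θ)
  rw [hθt] at key
  unfold greatCircle
  rw [h, hxy]
  generalize (1 - t) * θ = a at key ⊢
  generalize t * θ = b at key ⊢
  field_simp
  linear_combination key

theorem sum_deriv_greatCircle_sq (t : ℝ) :
    ∑ i, deriv (fun s => greatCircle θ x y s i) t ^ 2 = θ ^ 2 := by
  have h := sum_add_sq_of_sum_sq_eq_one hx hy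
    (-(θ * cos ((1 - t) * θ)) / sin θ) (θ * cos (t * θ) / sin θ)
  simp only [div_mul_eq_mul_div, ← add_div] at h
  have hθt : (1 - t) * θ + t * θ = θ := by ring
  have key := cos_sq_add_cos_sq_sub_two_mul_cos_mul_cos_mul_cos_add ((1 - t) * θ) (t * θ)
  rw [hθt] at key
  simp only [(hasDerivAt_greatCircle t _).deriv]
  rw [h, hxy]
  generalize (1 - t) * θ = a at key ⊢
  generalize t * θ = b at key ⊢
  field_simp
  linear_combination θ ^ 2 * key

end UnitSphere

end GreatCircle

/-- **The sine-interpolation (slerp) path is the constant-speed Fisher geodesic.**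
Let `p₀, p₁` be positive probability vectors with Hellinger angle
`L = 2 arccos(∑ i, √(p₀ᵢ p₁ᵢ))`, `0 < L < π`.  Then the componentwise path
`q(t)ᵢ = (sin((1−t)L/2)√(p₀ᵢ) + sin(tL/2)√(p₁ᵢ))² / sin²(L/2)`
interpolates from `p₀` to `p₁`, is a probability vector for every `t ∈ [0,1]`,
has constant Fisher speed `L`, and has total Fisher length exactly `L`. -/
theorem slerp_path_is_fisher_geodesic
    {ι : Type*} [Fintype ι] (p₀ p₁ : ι → ℝ)
    (h₀pos : ∀ i, 0 < p₀ i) (h₁pos : ∀ i, 0 < p₁ i)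
    (h₀sum : ∑ i, p₀ i = 1) (h₁sum : ∑ i, p₁ i = 1)
    (L : ℝ) (hL : L = 2 * Real.arccos (∑ i, Real.sqrt (p₀ i * p₁ i)))
    (hL0 : 0 < L) (hLπ : L < π)
    (q : ℝ → ι → ℝ)
    (hq : ∀ t i, q t i =
      (Real.sin ((1 - t) * L / 2) * Real.sqrt (p₀ i)
        + Real.sin (t * L / 2) * Real.sqrt (p₁ i)) ^ 2 / Real.sin (L / 2) ^ 2) :
    q 0 = p₀ ∧ q 1 = p₁ ∧
    (∀ t ∈ Icc (0:ℝ) 1, (∀ i, 0 ≤ q t i) ∧ ∑ i, q t i = 1) ∧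
    (∀ t ∈ Icc (0:ℝ) 1,
      Real.sqrt (∑ i, (deriv (fun s => q s i) t) ^ 2 / q t i) = L) ∧
    (∫ t in (0:ℝ)..1,
        Real.sqrt (∑ i, (deriv (fun s => q s i) t) ^ 2 / q t i)) = L := by
  set u : ι → ℝ := fun i => √(p₀ i)
  set v : ι → ℝ := fun i => √(p₁ i)
  have hu : ∑ i, u i ^ 2 = 1 := by simpa [u, sq_sqrt (h₀pos _).le] using h₀sum
  have hv : ∑ i, v i ^ 2 = 1 := by simpa [v, sq_sqrt (h₁pos _).le] using h₁sum
  have huv : ∑ i, u i * v i = cos (L / 2) := by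
    have hc : ∑ i, √(p₀ i * p₁ i) = ∑ i, u i * v i :=
      Finset.sum_congr rfl fun i _ => sqrt_mul (h₀pos i).le _
    have hc₀ : 0 ≤ ∑ i, u i * v i :=
      Finset.sum_nonneg fun i _ => mul_nonneg (sqrt_nonneg _) (sqrt_nonneg _)
    rw [hL, hc, mul_div_cancel_left₀ _ two_ne_zero,
      cos_arccos (by linarith) (sum_mul_le_one_of_sum_sq_eq_one hu hv)]
  have hθ₀ : 0 < L / 2 := by linarith
  have hθπ : L / 2 < π := by linarith
  have hsin : sin (L / 2) ≠ 0 := (sin_pos_of_pos_of_lt_pi hθ₀ hθπ).ne'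
  have hqγ : q = fun t i => greatCircle (L / 2) u v t i ^ 2 := by
    ext t i
    rw [hq, greatCircle, div_pow, mul_div_assoc, mul_div_assoc]
  have hγpos : ∀ t ∈ Icc (0:ℝ) 1, ∀ i, 0 < greatCircle (L / 2) u v t i := fun t ht =>
    greatCircle_pos hθ₀ hθπ (fun i => sqrt_pos.2 (h₀pos i)) (fun i => sqrt_pos.2 (h₁pos i)) ht
  have hspeed : ∀ t ∈ Icc (0:ℝ) 1,
      √(∑ i, (deriv (fun s => q s i) t) ^ 2 / q t i) = L := by
    intro t ht
    simp only [hqγ, deriv_sq_sq_div_sq (hasDerivAt_greatCircle t _).differentiableAt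
      (hγpos t ht _).ne']
    rw [← Finset.mul_sum, sum_deriv_greatCircle_sq hu hv huv hsin t,
      show 4 * (L / 2) ^ 2 = L ^ 2 by ring, sqrt_sq hL0.le]
  refine ⟨?_, ?_, fun t ht => ⟨fun i => ?_, ?_⟩, hspeed, ?_⟩
  · simp [hqγ, greatCircle_zero hsin, u, sq_sqrt (h₀pos _).le]
  · simp [hqγ, greatCircle_one hsin, v, sq_sqrt (h₁pos _).le]
  · rw [hqγ]; positivity
  · rw [hqγ]; exact sum_greatCircle_sq hu hv huv hsin t
  · rw [intervalIntegral.integral_congr (g := fun _ => L) fun t ht =>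
      hspeed t (by rwa [uIcc_of_le zero_le_one] at ht)]
    simp
end
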